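/- Let A be a 3×3 real symmetric matrix and let Ric be a 3×3 real symmetric matrix such that Ric = tr(A)·A − A². If Ric = λ·I + η·(e₃ ⊗ e₃) with η ≠ 0 (where e₃ is the third standard basis vector), then A preserves the line spanned by e₃ and the plane orthogonal to e₃, i.e., A can be diagonalized in an orthonormal basis containing e₃. -/
import Mathlib


open scoped Matrix

/-- The third standard basis vector of ℝ³. -/
def e3 : Fin 3 → ℝ := ![0, 0, 1]

/-- In the proof of Lemma 5.2: if `Ric = tr(A)·A − A²` and `Ric = λ·I + η·e₃⊗e₃` with
η ≠ 0 and `A` symmetric, then `A` preserves the line spanned by `e₃` and the plane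
orthogonal to `e₃`. -/
theorem stmt_3 (A Ric : Matrix (Fin 3) (Fin 3) ℝ) (lam eta : ℝ) (heta : eta ≠ 0)
    (hA : A.IsSymm)
    (hRicA : Ric = A.trace • A - A * A)
    (hRic : Ric = lam • (1 : Matrix (Fin 3) (Fin 3) ℝ) + eta • Matrix.vecMulVec e3 e3) :
    (∃ c : ℝ, A.mulVec e3 = c • e3) ∧
    (∀ v : Fin 3 → ℝ, v ⬝ᵥ e3 = 0 → A.mulVec v ⬝ᵥ e3 = 0) := by
  have hcomm : A * Ric = Ric * A := by
    rw [hRicA, mul_sub, sub_mul, mul_smul_comm, smul_mul_assoc, mul_assoc]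
  rw [hRic] at hcomm
  have hE : A * Matrix.vecMulVec e3 e3 = Matrix.vecMulVec e3 e3 * A := by
    have h : eta • (A * Matrix.vecMulVec e3 e3) = eta • (Matrix.vecMulVec e3 e3 * A) := by
      have := hcomm
      simp only [mul_add, add_mul, mul_smul_comm, smul_mul_assoc, mul_one, one_mul] at this
      exact add_left_cancel this
    exact smul_right_injective _ heta h
  have key : ∀ i j, (A * Matrix.vecMulVec e3 e3) i j = (Matrix.vecMulVec e3 e3 * A) i j := by
    intro i j; rw [hE]
  have h20 : A 2 0 = 0 := by
    have := key 2 0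
    simpa [Matrix.mul_apply, Matrix.vecMulVec_apply, Fin.sum_univ_three, e3] using this.symm
  have h21 : A 2 1 = 0 := by
    have := key 2 1
    simpa [Matrix.mul_apply, Matrix.vecMulVec_apply, Fin.sum_univ_three, e3] using this.symm
  have h02 : A 0 2 = 0 := by
    have := key 0 2
    simpa [Matrix.mul_apply, Matrix.vecMulVec_apply, Fin.sum_univ_three, e3] using this
  have h12 : A 1 2 = 0 := by
    have := key 1 2
    simpa [Matrix.mul_apply, Matrix.vecMulVec_apply, Fin.sum_univ_three, e3] using this
  constructor
  · refine ⟨A 2 2, ?_⟩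
    funext i
    fin_cases i <;>
      simp [Matrix.mulVec, dotProduct, Fin.sum_univ_three, e3, h02, h12]
  · intro v hv
    have hv2 : v 2 = 0 := by
      simpa [dotProduct, Fin.sum_univ_three, e3] using hv
    simp [Matrix.mulVec, dotProduct, Fin.sum_univ_three, e3, h20, h21, hv2]
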